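/- arXiv:2603.14428 — 2 statements merged into one kernel-verified Lean document; each statement's English description precedes it below -/
import Mathlib

section
/- Let M be a finite set, P = P(M,F) and Q = P(M,G) reduced posets, and suppose g : P → Q is a pp-morphism with g(M) = M (bottom to bottom). Then g maps the set of maximal elements of P bijectively onto the set of maximal elements of Q, and hence induces a permutation σ of M with g(X) = σ[X] for all X ∈ P; consequently each element of F is mapped to an element of {M} ∪ {{x} : x ∈ M} ∪ G of the same cardinality. -/
/-!
A pp-morphism preserves maximality, so it sends each singleton `{x}` to a singleton `{σ x}`.
Because an element of a reduced poset is the union of the singletons above it and `g`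
transports those singletons, `g X = σ[X]` for every `X`. Applied to the bottom this gives
`σ[M] = M`, so `σ` is a permutation of the finite set `M`; the bijection on maximal elements and
the preservation of cardinalities follow.
-/

open Set Function

variable {α β γ : Type*}

/-- `Mset x` is the set of maximal elements (of the ambient poset) lying above `x`. -/
def Mset [PartialOrder α] (x : α) : Set α := {y | IsMax y ∧ x ≤ y}

/-- A pp-morphism: an order-preserving map `h` with `M(h x) = h[M x]` for all `x`. -/
def IsPP [PartialOrder α] [PartialOrder β] (h : α → β) : Prop :=
  Monotone h ∧ ∀ x, Mset (h x) = h '' Mset x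

/-- The reverse-inclusion partial order on a family of subsets. -/
def revPO (p : Set α → Prop) : PartialOrder {S : Set α // p S} :=
  PartialOrder.lift (fun A => OrderDual.toDual (A : Set α))
    (fun A B h => Subtype.ext (by simpa using h))

/-- Membership in the reduced poset `P(M, F)`: the base `M`, the singletons of elements
of `M`, and the members of `F`. -/
def RMem (M : Set α) (F : Set (Set α)) (S : Set α) : Prop :=
  S = M ∨ (∃ m ∈ M, S = {m}) ∨ S ∈ F

/-- The reduced poset `P(M, F)`, ordered by reverse inclusion. -/
def Red (M : Set α) (F : Set (Set α)) := {S : Set α // RMem M F S}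

instance (M : Set α) (F : Set (Set α)) : PartialOrder (Red M F) := revPO _

/-- The bottom element `M` of the reduced poset `P(M, F)`. -/
def botElem (M : Set α) (F : Set (Set α)) : Red M F := ⟨M, Or.inl rfl⟩

/-- The singleton element `{x}` (for `x ∈ M`) of the reduced poset `P(M, F)`. -/
def singElem (M : Set α) (F : Set (Set α)) {x : α} (hx : x ∈ M) : Red M F :=
  ⟨{x}, Or.inr (Or.inl ⟨x, hx, rfl⟩)⟩

theorem IsPP.isMax_apply [PartialOrder α] [PartialOrder β] {g : α → β} (hpp : IsPP g)
    {x : α} (hx : IsMax x) : IsMax (g x) := by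
  have h : g x ∈ g '' Mset x := mem_image_of_mem g ⟨hx, le_rfl⟩
  rw [← hpp.2 x] at h
  exact h.1

theorem Set.Finite.bijOn_of_image_eq {s : Set α} {f : α → α} (hs : s.Finite)
    (h : f '' s = s) : BijOn f s s :=
  (hs.surjOn_iff_bijOn_of_mapsTo (mapsTo_iff_image_subset.2 h.subset)).1 h.symm.subset

namespace Red

variable {M : Set α} {F G : Set (Set α)}

theorem le_iff {X Y : Red M F} : X ≤ Y ↔ Y.1 ⊆ X.1 := Iff.rfl

theorem le_singElem_iff {X : Red M F} {x : α} (hx : x ∈ M) :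
    X ≤ singElem M F hx ↔ x ∈ X.1 :=
  singleton_subset_iff

theorem val_subset (hF : ∀ S ∈ F, S.Nonempty ∧ S ⊆ M) (X : Red M F) : X.1 ⊆ M := by
  rcases X.2 with h | ⟨m, hm, h⟩ | h
  · exact h.subset
  · rw [h]
    exact singleton_subset_iff.2 hm
  · exact (hF _ h).2

theorem val_nonempty (hMne : M.Nonempty) (hF : ∀ S ∈ F, S.Nonempty ∧ S ⊆ M) (X : Red M F) :
    X.1.Nonempty := by
  rcases X.2 with h | ⟨m, -, h⟩ | h
  · rw [h]
    exact hMne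
  · rw [h]
    exact singleton_nonempty m
  · exact (hF _ h).1

theorem isMax_singElem (hMne : M.Nonempty) (hF : ∀ S ∈ F, S.Nonempty ∧ S ⊆ M) {x : α}
    (hx : x ∈ M) : IsMax (singElem M F hx) := by
  intro Y hY
  obtain ⟨y, hy⟩ := val_nonempty hMne hF Y
  change {x} ⊆ Y.1
  rw [singleton_subset_iff, ← mem_singleton_iff.1 (hY hy)]
  exact hy

theorem exists_eq_singElem_of_isMax (hMne : M.Nonempty) (hF : ∀ S ∈ F, S.Nonempty ∧ S ⊆ M)
    {X : Red M F} (hX : IsMax X) : ∃ x, ∃ hx : x ∈ M, X = singElem M F hx := by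
  obtain ⟨x, hxX⟩ := val_nonempty hMne hF X
  have hxM := val_subset hF X hxX
  exact ⟨x, hxM, hX.eq_of_le ((le_singElem_iff hxM).2 hxX)⟩

theorem val_apply_eq_image (hMne : M.Nonempty) (hF : ∀ S ∈ F, S.Nonempty ∧ S ⊆ M)
    (hG : ∀ S ∈ G, S.Nonempty ∧ S ⊆ M) {g : Red M F → Red M G} (hpp : IsPP g) {σ : α → α}
    (hσ : ∀ x (hx : x ∈ M), (g (singElem M F hx)).1 = {σ x}) (X : Red M F) :
    (g X).1 = σ '' X.1 := by
  ext y
  constructor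
  · intro hy
    have hyM := val_subset hG (g X) hy
    have hmem : singElem M G hyM ∈ g '' Mset X := by
      rw [← hpp.2 X]
      exact ⟨isMax_singElem hMne hG hyM, (le_singElem_iff hyM).2 hy⟩
    obtain ⟨W, ⟨hWmax, hXW⟩, hgW⟩ := hmem
    obtain ⟨x, hxM, rfl⟩ := exists_eq_singElem_of_isMax hMne hF hWmax
    refine ⟨x, (le_singElem_iff hxM).1 hXW, ?_⟩
    have hval : (g (singElem M F hxM)).1 = {y} := congrArg Subtype.val hgW
    exact singleton_eq_singleton_iff.1 (hσ x hxM ▸ hval)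
  · rintro ⟨x, hxX, rfl⟩
    have hxM := val_subset hF X hxX
    have hle := hpp.1 ((le_singElem_iff hxM).2 hxX)
    rwa [le_iff, hσ x hxM, singleton_subset_iff] at hle

end Red

/-- A pp-morphism `P(M,F) → P(M,G)` sending bottom to bottom restricts to a bijection on
maximal elements, is induced by a permutation `σ` of `M` via `X ↦ σ[X]`, and sends each
member of `F` to an element of the same cardinality. -/
theorem stmt15 (M : Set α) (hM : M.Finite) (hMne : M.Nonempty)
    (F G : Set (Set α)) (hF : ∀ S ∈ F, S.Nonempty ∧ S ⊆ M)
    (hG : ∀ S ∈ G, S.Nonempty ∧ S ⊆ M)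
    (g : Red M F → Red M G) (hpp : IsPP g)
    (hbot : g (botElem M F) = botElem M G) :
    Set.BijOn g {X : Red M F | IsMax X} {Y : Red M G | IsMax Y} ∧
    ∃ σ : α → α, Set.BijOn σ M M ∧
      (∀ X : Red M F, (g X).1 = σ '' X.1) ∧
      (∀ S (hS : S ∈ F), ((g ⟨S, Or.inr (Or.inr hS)⟩).1).ncard = S.ncard) := by
  have hsing : ∀ x (hx : x ∈ M), ∃ y, (g (singElem M F hx)).1 = {y} := fun x hx => by
    obtain ⟨y, _, hgx⟩ := Red.exists_eq_singElem_of_isMax hMne hG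
      (hpp.isMax_apply (Red.isMax_singElem hMne hF hx))
    exact ⟨y, congrArg Subtype.val hgx⟩
  choose! σ hσ using hsing
  have hg := Red.val_apply_eq_image hMne hF hG hpp hσ
  have hσM : σ '' M = M := ((congrArg Subtype.val hbot).symm.trans (hg (botElem M F))).symm
  have hσbij : BijOn σ M M := hM.bijOn_of_image_eq hσM
  have hginj : Injective g := fun X Y hXY =>
    Subtype.ext ((hσbij.injOn.image_eq_image_iff (Red.val_subset hF X) (Red.val_subset hF Y)).1
      (by rw [← hg, ← hg, hXY]))
  refine ⟨⟨fun X => hpp.isMax_apply, hginj.injOn, fun Y hY => ?_⟩, σ, hσbij, hg,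
    fun S hS => (congrArg ncard (hg _)).trans (hσbij.injOn.mono (hF S hS).2).ncard_image⟩
  obtain ⟨y, hyM, rfl⟩ := Red.exists_eq_singElem_of_isMax hMne hG hY
  obtain ⟨x, hxM, rfl⟩ := hσbij.surjOn hyM
  exact ⟨singElem M F hxM, Red.isMax_singElem hMne hF hxM, Subtype.ext (hσ x hxM)⟩
end

section
/- Let M = {1,2,3}. Define P = P(M, {{1,2}}), Q = P(M, {{1,2},{2,3}}), R = P(M, {{1,2},{1,3},{2,3}}) (reduced posets ordered by reverse inclusion). Then there exist surjective pp-morphisms h : P ⊎ P → Q and k : Q ⊎ Q → R. -/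
/-!
Taking images under a map `f` with `f '' M = N` sends `P(M, F)` to `P(N, G)` as soon as `f` maps
the members of `F` into `G`. When the base is nonempty and the members of the family are nonempty
subsets of it, the maximal elements of a reduced poset are exactly the singletons, so
`M(f[x]) = {{f m} : m ∈ x} = f[M(x)]` and such a map is a pp-morphism. Maximality in a disjoint union is componentwise, so
pp-morphisms on the two summands glue. Hence `h` is the identity on one copy of `P` and the
transposition `(1 3)` on the other, which sends `{1, 2}` to `{2, 3}`; likewise `k` uses the
identity and `(2 3)`, which sends `{1, 2}` to `{1, 3}`.
-/

open Set Function

variable {α β γ : Type*}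

section Sum

variable [PartialOrder α] [PartialOrder β] [PartialOrder γ]

lemma Sum.isMax_inl_iff {a : α} : IsMax (Sum.inl a : α ⊕ β) ↔ IsMax a := by
  simp [IsMax, Sum.forall]

lemma Sum.isMax_inr_iff {b : β} : IsMax (Sum.inr b : α ⊕ β) ↔ IsMax b := by
  simp [IsMax, Sum.forall]

lemma mset_inl (a : α) : Mset (Sum.inl a : α ⊕ β) = Sum.inl '' Mset a := by
  ext (b | b) <;> simp [Mset, Sum.isMax_inl_iff]

lemma mset_inr (b : β) : Mset (Sum.inr b : α ⊕ β) = Sum.inr '' Mset b := by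
  ext (a | a) <;> simp [Mset, Sum.isMax_inr_iff]

lemma IsPP.sumElim {h₁ : α → γ} {h₂ : β → γ} (H₁ : IsPP h₁) (H₂ : IsPP h₂) :
    IsPP (Sum.elim h₁ h₂) := by
  refine ⟨?_, ?_⟩
  · rintro (a | a) (b | b) hab
    · exact H₁.1 (Sum.inl_le_inl_iff.1 hab)
    · exact absurd hab Sum.not_inl_le_inr
    · exact absurd hab Sum.not_inr_le_inl
    · exact H₂.1 (Sum.inr_le_inr_iff.1 hab)
  · rintro (a | b)
    · rw [Sum.elim_inl, H₁.2, mset_inl, image_image]; rfl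
    · rw [Sum.elim_inr, H₂.2, mset_inr, image_image]; rfl

end Sum

namespace Red

variable {M : Set α} {F : Set (Set α)}

lemma le_iff_s18 {A B : Red M F} : A ≤ B ↔ B.1 ⊆ A.1 := Iff.rfl

section Maximal

variable (hM : M.Nonempty) (hF : ∀ S ∈ F, S.Nonempty ∧ S ⊆ M)
include hM hF

lemma nonempty (x : Red M F) : x.1.Nonempty := by
  rcases x.2 with h | ⟨m, -, h⟩ | h
  · rw [h]; exact hM
  · rw [h]; exact singleton_nonempty m
  · exact (hF _ h).1

omit hM in
lemma subset_base (x : Red M F) : x.1 ⊆ M := by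
  rcases x.2 with h | ⟨m, hm, h⟩ | h
  · exact h.subset
  · exact h ▸ singleton_subset_iff.2 hm
  · exact (hF _ h).2

lemma isMax_iff (y : Red M F) : IsMax y ↔ ∃ m ∈ M, y.1 = {m} := by
  constructor
  · intro hy
    obtain ⟨m, hmy⟩ := nonempty hM hF y
    have hmM := subset_base hF y hmy
    have hle : y ≤ singElem M F hmM := le_iff_s18.2 (singleton_subset_iff.2 hmy)
    exact ⟨m, hmM, Subset.antisymm (le_iff_s18.1 (hy hle)) (singleton_subset_iff.2 hmy)⟩
  · rintro ⟨m, -, hy⟩ z hz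
    rw [le_iff_s18, hy] at hz ⊢
    exact ((nonempty hM hF z).subset_singleton_iff.1 hz).superset

lemma mset_eq (x : Red M F) : Mset x = {y | ∃ m ∈ x.1, y.1 = {m}} := by
  ext y
  simp only [Mset, mem_ofPred_eq, isMax_iff hM hF, le_iff_s18]
  constructor
  · rintro ⟨⟨m, -, hy⟩, hyx⟩
    exact ⟨m, hyx (hy ▸ rfl), hy⟩
  · rintro ⟨m, hmx, hy⟩
    exact ⟨⟨m, subset_base hF x hmx, hy⟩, hy ▸ singleton_subset_iff.2 hmx⟩

end Maximal

variable {N : Set β} {G : Set (Set β)}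

def map (f : α → β) (hMN : f '' M = N) (hFG : ∀ S ∈ F, f '' S ∈ G) : Red M F → Red N G :=
  fun x => ⟨f '' x.1, by
    rcases x.2 with h | ⟨m, hm, h⟩ | h
    · exact Or.inl (by rw [h, hMN])
    · exact Or.inr (Or.inl ⟨f m, hMN ▸ mem_image_of_mem f hm, h ▸ image_singleton⟩)
    · exact Or.inr (Or.inr (hFG _ h))⟩

variable {f : α → β} {hMN : f '' M = N} {hFG : ∀ S ∈ F, f '' S ∈ G}

@[simp]
lemma coe_map (x : Red M F) : (map f hMN hFG x).1 = f '' x.1 := rfl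

lemma isPP_map (hM : M.Nonempty) (hF : ∀ S ∈ F, S.Nonempty ∧ S ⊆ M)
    (hG : ∀ T ∈ G, T.Nonempty ∧ T ⊆ N) : IsPP (map f hMN hFG) := by
  have hN : N.Nonempty := hMN ▸ hM.image f
  refine ⟨fun A B hAB => image_mono hAB, fun x => ?_⟩
  rw [mset_eq hN hG, mset_eq hM hF]
  ext y
  simp only [coe_map, mem_ofPred_eq, mem_image, exists_exists_and_eq_and]
  constructor
  · rintro ⟨m, hmx, hy⟩
    exact ⟨singElem M F (subset_base hF x hmx), ⟨m, hmx, rfl⟩,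
      Subtype.ext (by rw [hy, coe_map, singElem, image_singleton])⟩
  · rintro ⟨z, ⟨m, hmx, hz⟩, rfl⟩
    exact ⟨m, hmx, by rw [coe_map, hz, image_singleton]⟩

section SumElim

variable {f₁ f₂ : α → β}
  {hMN₁ : f₁ '' M = N} {hMN₂ : f₂ '' M = N}
  {hFG₁ : ∀ S ∈ F, f₁ '' S ∈ G} {hFG₂ : ∀ S ∈ F, f₂ '' S ∈ G}

lemma surjective_sumElim_map (hG : ∀ T ∈ G, ∃ S ∈ F, f₁ '' S = T ∨ f₂ '' S = T) :
    Surjective (Sum.elim (map f₁ hMN₁ hFG₁) (map f₂ hMN₂ hFG₂)) := by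
  rintro ⟨T, hT | ⟨n, hn, hT⟩ | hT⟩
  · exact ⟨.inl (botElem M F), Subtype.ext (hMN₁.trans hT.symm)⟩
  · rw [← hMN₁] at hn
    obtain ⟨m, hm, rfl⟩ := hn
    exact ⟨.inl (singElem M F hm), Subtype.ext (image_singleton.trans hT.symm)⟩
  · obtain ⟨S, hS, h | h⟩ := hG T hT
    · exact ⟨.inl ⟨S, Or.inr (Or.inr hS)⟩, Subtype.ext h⟩
    · exact ⟨.inr ⟨S, Or.inr (Or.inr hS)⟩, Subtype.ext h⟩

end SumElim

lemma exists_surjective_isPP_sum (hM : M.Nonempty) (hF : ∀ S ∈ F, S.Nonempty ∧ S ⊆ M)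
    (hG : ∀ T ∈ G, T.Nonempty ∧ T ⊆ N) (f₁ f₂ : α → β) (hMN₁ : f₁ '' M = N)
    (hMN₂ : f₂ '' M = N) (hFG₁ : ∀ S ∈ F, f₁ '' S ∈ G) (hFG₂ : ∀ S ∈ F, f₂ '' S ∈ G)
    (hGF : ∀ T ∈ G, ∃ S ∈ F, f₁ '' S = T ∨ f₂ '' S = T) :
    ∃ h : Red M F ⊕ Red M F → Red N G, Surjective h ∧ IsPP h :=
  ⟨Sum.elim (map f₁ hMN₁ hFG₁) (map f₂ hMN₂ hFG₂), surjective_sumElim_map hGF,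
    (isPP_map hM hF hG).sumElim (isPP_map hM hF hG)⟩

end Red

lemma Equiv.swap_image_eq_self [DecidableEq α] {s : Set α} {a b : α} (ha : a ∈ s) (hb : b ∈ s) :
    Equiv.swap a b '' s = s :=
  image_perm fun x hx => by
    by_contra hxs
    exact hx (Equiv.swap_apply_of_ne_of_ne (ne_of_mem_of_not_mem ha hxs).symm
      (ne_of_mem_of_not_mem hb hxs).symm)

/-- There are surjective pp-morphisms `P ⊎ P ↠ Q` and `Q ⊎ Q ↠ R` for the three reduced
posets `P = P({1,2,3},{{1,2}})`, `Q = P({1,2,3},{{1,2},{2,3}})`,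
`R = P({1,2,3},{{1,2},{1,3},{2,3}})`. -/
theorem stmt18 :
    (∃ h : Red ({1, 2, 3} : Set ℕ) ({{1, 2}} : Set (Set ℕ)) ⊕
           Red ({1, 2, 3} : Set ℕ) ({{1, 2}} : Set (Set ℕ)) →
        Red ({1, 2, 3} : Set ℕ) ({{1, 2}, {2, 3}} : Set (Set ℕ)),
      Function.Surjective h ∧ IsPP h) ∧
    (∃ k : Red ({1, 2, 3} : Set ℕ) ({{1, 2}, {2, 3}} : Set (Set ℕ)) ⊕
           Red ({1, 2, 3} : Set ℕ) ({{1, 2}, {2, 3}} : Set (Set ℕ)) →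
        Red ({1, 2, 3} : Set ℕ) ({{1, 2}, {1, 3}, {2, 3}} : Set (Set ℕ)),
      Function.Surjective k ∧ IsPP k) := by
  have hM : ({1, 2, 3} : Set ℕ).Nonempty := insert_nonempty _ _
  have hP : ∀ S ∈ ({{1, 2}} : Set (Set ℕ)), S.Nonempty ∧ S ⊆ {1, 2, 3} := by
    simp [insert_subset_iff]
  have hQ : ∀ S ∈ ({{1, 2}, {2, 3}} : Set (Set ℕ)), S.Nonempty ∧ S ⊆ {1, 2, 3} := by
    simp [insert_subset_iff]
  have hR : ∀ S ∈ ({{1, 2}, {1, 3}, {2, 3}} : Set (Set ℕ)), S.Nonempty ∧ S ⊆ {1, 2, 3} := by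
    simp [insert_subset_iff]
  refine ⟨Red.exists_surjective_isPP_sum hM hP hQ id (Equiv.swap 1 3) (image_id _)
      (Equiv.swap_image_eq_self (by simp) (by simp)) ?_ ?_ ?_,
    Red.exists_surjective_isPP_sum hM hQ hR id (Equiv.swap 2 3) (image_id _)
      (Equiv.swap_image_eq_self (by simp) (by simp)) ?_ ?_ ?_⟩ <;>
  simp [image_pair, Equiv.swap_apply_of_ne_of_ne, pair_comm]
end
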